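/- Let A = B + ε⁻¹D with B symmetric positive definite (λ_min(B) ≥ α), D symmetric positive semidefinite, and suppose ‖Bc‖ ≤ C₁h⁻²‖c‖ and ‖Dc‖ ≤ C₂h⁻¹·δ(c) where δ(c) ≤ TOL·‖c‖ (an adaptively enforced tolerance). Then for c ≠ 0 with Ac = f, κ(c) ≤ α⁻¹h⁻²(C₁ + C₂·h·TOL/ε). -/

import Mathlib

open scoped InnerProductSpace

/-!
Coercivity of `B` survives adding the positive semidefinite `ε⁻¹ D`, so `A` is bounded below by
`α` (Cauchy–Schwarz) and `‖A⁻¹‖ ≤ α⁻¹`. On the other hand `‖A c‖ ≤ ‖B c‖ + ε⁻¹ ‖D c‖`, and the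
adaptive tolerance turns the penalty term into `C₂ h⁻¹ TOL ‖c‖ / ε`, of the same form as the bound
`C₁ h⁻² ‖c‖` on `‖B c‖`.
-/

section BoundedBelow

variable {𝕜 E F : Type*} [NontriviallyNormedField 𝕜] [NormedAddCommGroup E] [NormedSpace 𝕜 E]
  [NormedAddCommGroup F] [NormedSpace 𝕜 F]

theorem ContinuousLinearEquiv.norm_symm_le_inv_of_bound (A : E ≃L[𝕜] F) {α : ℝ} (hα : 0 < α)
    (hA : ∀ x, α * ‖x‖ ≤ ‖A x‖) : ‖(A.symm : F →L[𝕜] E)‖ ≤ α⁻¹ := by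
  refine ContinuousLinearMap.opNorm_le_bound _ (inv_nonneg.mpr hα.le) fun y ↦ ?_
  have hy : α * ‖A.symm y‖ ≤ ‖y‖ := by simpa using hA (A.symm y)
  rw [inv_mul_eq_div, le_div_iff₀ hα, mul_comm]
  exact hy

end BoundedBelow

section Coercive

variable {E : Type*} [NormedAddCommGroup E] [InnerProductSpace ℝ E]

theorem mul_norm_le_norm_of_coercive (T : E → E) {α : ℝ} (hT : ∀ x, α * ‖x‖ ^ 2 ≤ ⟪T x, x⟫_ℝ)
    (x : E) : α * ‖x‖ ≤ ‖T x‖ := by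
  rcases (norm_nonneg x).eq_or_lt with hx | hx
  · rw [← hx, mul_zero]
    exact norm_nonneg _
  have hCS : α * ‖x‖ * ‖x‖ ≤ ‖T x‖ * ‖x‖ :=
    calc α * ‖x‖ * ‖x‖ = α * ‖x‖ ^ 2 := by ring
      _ ≤ ⟪T x, x⟫_ℝ := hT x
      _ ≤ ‖T x‖ * ‖x‖ := real_inner_le_norm _ _
  exact le_of_mul_le_mul_right hCS hx

theorem coercive_add_smul_of_nonneg (B D : E →L[ℝ] E) {α t : ℝ}
    (hB : ∀ x, α * ‖x‖ ^ 2 ≤ ⟪B x, x⟫_ℝ) (hD : ∀ x, 0 ≤ ⟪D x, x⟫_ℝ) (ht : 0 ≤ t) (x : E) :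
    α * ‖x‖ ^ 2 ≤ ⟪(B + t • D) x, x⟫_ℝ := by
  rw [add_apply, smul_apply, inner_add_left,
    real_inner_smul_left]
  nlinarith [hB x, hD x, mul_nonneg ht (hD x)]

theorem norm_add_smul_apply_le (B D : E →L[ℝ] E) {t : ℝ} (ht : 0 ≤ t) (x : E) :
    ‖(B + t • D) x‖ ≤ ‖B x‖ + t * ‖D x‖ := by
  rw [add_apply, smul_apply, ← norm_smul_of_nonneg ht]
  exact norm_add_le _ _

end Coercive

theorem effective_cond_adaptive_tol_general (n : ℕ)
    (B D : EuclideanSpace ℝ (Fin n) →L[ℝ] EuclideanSpace ℝ (Fin n))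
    (α h ε C₁ C₂ TOL : ℝ)
    (hα : 0 < α) (hh : 0 < h) (hε : 0 < ε) (hC₂ : 0 < C₂)
    (hBcoer : ∀ x, α * ‖x‖ ^ 2 ≤ ⟪B x, x⟫_ℝ)
    (hDpsd : ∀ x, 0 ≤ ⟪D x, x⟫_ℝ)
    (A : EuclideanSpace ℝ (Fin n) ≃L[ℝ] EuclideanSpace ℝ (Fin n))
    (hA : (A : EuclideanSpace ℝ (Fin n) →L[ℝ] EuclideanSpace ℝ (Fin n)) = B + ε⁻¹ • D)
    (δ : EuclideanSpace ℝ (Fin n) → ℝ)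
    (c : EuclideanSpace ℝ (Fin n)) (hc : c ≠ 0)
    (hBc : ‖B c‖ ≤ C₁ * h⁻¹ ^ 2 * ‖c‖)
    (hDc : ‖D c‖ ≤ C₂ * h⁻¹ * δ c)
    (hδc : δ c ≤ TOL * ‖c‖) :
    ‖(A.symm : EuclideanSpace ℝ (Fin n) →L[ℝ] EuclideanSpace ℝ (Fin n))‖ * ‖A c‖ / ‖c‖ ≤
      α⁻¹ * h⁻¹ ^ 2 * (C₁ + C₂ * h * TOL / ε) := by
  have hεinv : 0 ≤ ε⁻¹ := inv_nonneg.mpr hε.le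
  have hA_apply (x) : A x = (B + ε⁻¹ • D) x := by rw [← hA]; rfl
  have hA_below (x) : α * ‖x‖ ≤ ‖A x‖ := by
    rw [hA_apply]
    exact mul_norm_le_norm_of_coercive _ (coercive_add_smul_of_nonneg B D hBcoer hDpsd hεinv) x
  have hAinv := A.norm_symm_le_inv_of_bound hα hA_below
  have hDc' : ‖D c‖ ≤ C₂ * h⁻¹ * (TOL * ‖c‖) :=
    hDc.trans (mul_le_mul_of_nonneg_left hδc (by positivity))
  have hAc : ‖A c‖ ≤ h⁻¹ ^ 2 * (C₁ + C₂ * h * TOL / ε) * ‖c‖ :=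
    calc ‖A c‖ ≤ ‖B c‖ + ε⁻¹ * ‖D c‖ := hA_apply c ▸ norm_add_smul_apply_le B D hεinv c
      _ ≤ C₁ * h⁻¹ ^ 2 * ‖c‖ + ε⁻¹ * (C₂ * h⁻¹ * (TOL * ‖c‖)) := by gcongr
      _ = h⁻¹ ^ 2 * (C₁ + C₂ * h * TOL / ε) * ‖c‖ := by field_simp
  rw [div_le_iff₀ (norm_pos_iff.mpr hc), mul_assoc _ _ (C₁ + _), mul_assoc α⁻¹]
  gcongr

/-- Effective condition number under an adaptively enforced tolerance on the penalty
seminorm: `κ(c) ≤ α⁻¹h⁻²(C₁ + C₂·h·TOL/ε)`. -/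
theorem effective_cond_adaptive_tol (n : ℕ)
    (B D : EuclideanSpace ℝ (Fin n) →L[ℝ] EuclideanSpace ℝ (Fin n))
    (hBsym : ∀ x y, ⟪B x, y⟫_ℝ = ⟪x, B y⟫_ℝ)
    (hDsym : ∀ x y, ⟪D x, y⟫_ℝ = ⟪x, D y⟫_ℝ)
    (α h ε C₁ C₂ TOL : ℝ)
    (hα : 0 < α) (hh : 0 < h) (hε : 0 < ε) (hC₁ : 0 < C₁) (hC₂ : 0 < C₂) (hTOL : 0 < TOL)
    (hBcoer : ∀ x, α * ‖x‖ ^ 2 ≤ ⟪B x, x⟫_ℝ)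
    (hDpsd : ∀ x, 0 ≤ ⟪D x, x⟫_ℝ)
    (A : EuclideanSpace ℝ (Fin n) ≃L[ℝ] EuclideanSpace ℝ (Fin n))
    (hA : (A : EuclideanSpace ℝ (Fin n) →L[ℝ] EuclideanSpace ℝ (Fin n)) = B + ε⁻¹ • D)
    (δ : EuclideanSpace ℝ (Fin n) → ℝ) (hδ : ∀ v, 0 ≤ δ v)
    (c f : EuclideanSpace ℝ (Fin n)) (hc : c ≠ 0) (hf : A c = f)
    (hBc : ‖B c‖ ≤ C₁ * h⁻¹ ^ 2 * ‖c‖)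
    (hDc : ‖D c‖ ≤ C₂ * h⁻¹ * δ c)
    (hδc : δ c ≤ TOL * ‖c‖) :
    ‖(A.symm : EuclideanSpace ℝ (Fin n) →L[ℝ] EuclideanSpace ℝ (Fin n))‖ * ‖A c‖ / ‖c‖ ≤
      α⁻¹ * h⁻¹ ^ 2 * (C₁ + C₂ * h * TOL / ε) :=
  effective_cond_adaptive_tol_general n B D α h ε C₁ C₂ TOL hα hh hε hC₂ hBcoer hDpsd A hA δ c hc
    hBc hDc hδc
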